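/- arXiv:2507.03798 — 5 statements merged into one kernel-verified Lean document; each statement's English description precedes it below -/
import Mathlib

section
/- Let s be an integer and set r = |6s+1| (so r is a positive integer coprime to 6). Let Δ = Δ(2,3,r) be the triangle group and let y = c^((r+3)/2) * a * c^(-(r+3)/2) * a be the indicated element of Δ (where a, b, c denote the images of the generators). Let G be a perfect group, let N be a subgroup of G contained in the center of G (hence normal), let m ∈ G, and suppose there is a group isomorphism φ : G/N ≃* Δ with φ(m N) = y. Then the normal closure of {m} in G is all of G, i.e., Subgroup.normalClosure {m} = ⊤. -/
/-- Generators of the triangle group. -/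
inductive TriGen : Type
  | a | b | c

/-- Relators of the triangle group Δ(p,q,r): aᵖ, bᵠ, cʳ, abc. -/
def triangleRels (p q r : ℕ) : Set (FreeGroup TriGen) :=
  {FreeGroup.of TriGen.a ^ p, FreeGroup.of TriGen.b ^ q, FreeGroup.of TriGen.c ^ r,
    FreeGroup.of TriGen.a * FreeGroup.of TriGen.b * FreeGroup.of TriGen.c}

/-- The triangle group Δ(p,q,r), presented with generators a, b, c and
relators aᵖ, bᵠ, cʳ, abc. -/
abbrev TriangleGroup (p q r : ℕ) := PresentedGroup (triangleRels p q r)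

/-- The image of the generator `a` in Δ(p,q,r). -/
def ta (p q r : ℕ) : TriangleGroup p q r := PresentedGroup.of TriGen.a

/-- The image of the generator `b` in Δ(p,q,r). -/
def tb (p q r : ℕ) : TriangleGroup p q r := PresentedGroup.of TriGen.b

/-- The image of the generator `c` in Δ(p,q,r). -/
def tc (p q r : ℕ) : TriangleGroup p q r := PresentedGroup.of TriGen.c

/-!
Write k = (r + 3) / 2, so 2k = r + 3. In the quotient of Δ(2,3,r) by the normal closure of y, the
relation y = 1 says that c^k commutes with a = a⁻¹. As c^r = 1, also c^3 = c^(2k) commutes with a,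
and 3 is prime to k, so c commutes with a. Then a, b = a⁻¹c⁻¹ and c commute, and since their orders
divide 2, 3 and r with gcd(r, 6) = 1, the relation abc = 1 kills all three: y normally generates Δ.
Hence the normal closure H of m satisfies H N = G; with N central, G/H is abelian,
so H ⊇ [G, G] = G.
-/

theorem Commute.of_pow_left_of_coprime {G : Type*} [Group G] {x y : G} {m n : ℕ}
    (hmn : m.Coprime n) (hm : Commute (x ^ m) y) (hn : Commute (x ^ n) y) : Commute x y := by
  have hx : x = (x ^ m) ^ m.gcdA n * (x ^ n) ^ m.gcdB n := by
    rw [← zpow_natCast, ← zpow_natCast, ← zpow_mul, ← zpow_mul, ← zpow_add, ← Nat.gcd_eq_gcd_ab,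
      hmn, Nat.cast_one, zpow_one]
  rw [hx]
  exact (hm.zpow_left _).mul_left (hn.zpow_left _)

section TriangleRelations

variable {X : Type*} [Group X] {A B C : X} {r : ℕ}

theorem eq_one_of_triangle_relations_of_commute (hr : r.Coprime 6) (hA : A ^ 2 = 1)
    (hB : B ^ 3 = 1) (hC : C ^ r = 1) (hABC : A * B * C = 1) (hAC : Commute A C) :
    A = 1 ∧ B = 1 ∧ C = 1 := by
  have hB_eq : B = A⁻¹ * C⁻¹ := eq_inv_mul_of_mul_eq (mul_eq_one_iff_eq_inv.1 hABC)
  have hAB : Commute A B := by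
    rw [hB_eq]; exact (Commute.refl A).inv_right.mul_right hAC.inv_right
  have hC6 : C ^ 6 = 1 := by
    have hC_eq : C = (A * B)⁻¹ := eq_inv_of_mul_eq_one_right hABC
    calc C ^ 6 = ((A ^ 2) ^ 3 * (B ^ 3) ^ 2)⁻¹ := by
          rw [hC_eq, inv_pow, hAB.mul_pow, ← pow_mul, ← pow_mul]
      _ = 1 := by rw [hA, hB]; simp
  have hC1 : C = 1 := (pow_eq_one_iff_of_coprime hr).1 ⟨hC, hC6⟩
  have hB_inv : B = A⁻¹ := by rw [hB_eq, hC1, inv_one, mul_one]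
  have hA1 : A = 1 := by
    refine (pow_eq_one_iff_of_coprime (by norm_num : Nat.Coprime 2 3)).1 ⟨hA, ?_⟩
    rwa [hB_inv, inv_pow, inv_eq_one] at hB
  exact ⟨hA1, by rw [hB_inv, hA1, inv_one], hC1⟩

theorem eq_one_of_triangle_relations_of_conj {k : ℕ} (hr : r.Coprime 6) (hk : 2 * k = r + 3)
    (hA : A ^ 2 = 1) (hB : B ^ 3 = 1) (hC : C ^ r = 1) (hABC : A * B * C = 1)
    (hy : C ^ k * A * (C ^ k)⁻¹ * A = 1) : A = 1 ∧ B = 1 ∧ C = 1 := by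
  have hCkA : Commute (C ^ k) A := by
    have hA_inv : A⁻¹ = A := inv_eq_of_mul_eq_one_right (by rw [← sq, hA])
    rw [mul_eq_one_iff_eq_inv, hA_inv, mul_inv_eq_iff_eq_mul] at hy
    exact hy
  have hC3A : Commute (C ^ 3) A := by
    have hC3 : C ^ 3 = (C ^ k) ^ 2 := by rw [← pow_mul, mul_comm, hk, pow_add, hC, one_mul]
    rw [hC3]; exact hCkA.pow_left 2
  have hk3 : Nat.Coprime 3 k := by
    have hr3 : Nat.Coprime 3 r := (hr.coprime_dvd_right (by norm_num)).symm
    rw [Nat.Prime.coprime_iff_not_dvd Nat.prime_three] at hr3 ⊢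
    omega
  exact eq_one_of_triangle_relations_of_commute hr hA hB hC hABC
    (Commute.of_pow_left_of_coprime hk3 hC3A hCkA).symm

end TriangleRelations

theorem ta_pow_eq_one (p q r : ℕ) : ta p q r ^ p = 1 :=
  (map_pow _ _ _).symm.trans (PresentedGroup.one_of_mem (by simp [triangleRels]))

theorem tb_pow_eq_one (p q r : ℕ) : tb p q r ^ q = 1 :=
  (map_pow _ _ _).symm.trans (PresentedGroup.one_of_mem (by simp [triangleRels]))

theorem tc_pow_eq_one (p q r : ℕ) : tc p q r ^ r = 1 :=
  (map_pow _ _ _).symm.trans (PresentedGroup.one_of_mem (by simp [triangleRels]))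

theorem ta_mul_tb_mul_tc (p q r : ℕ) : ta p q r * tb p q r * tc p q r = 1 := by
  rw [ta, tb, tc, PresentedGroup.of, PresentedGroup.of, PresentedGroup.of, ← map_mul, ← map_mul]
  exact PresentedGroup.one_of_mem (by simp [triangleRels])

theorem TriangleGroup.eq_top_of_generators_mem {p q r : ℕ} (H : Subgroup (TriangleGroup p q r))
    (ha : ta p q r ∈ H) (hb : tb p q r ∈ H) (hc : tc p q r ∈ H) : H = ⊤ :=
  (Subgroup.eq_top_iff' H).2 <| PresentedGroup.generated_by _ H fun
    | .a => ha
    | .b => hb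
    | .c => hc

theorem TriangleGroup.normalClosure_conj_mul_eq_top {r : ℕ} (hr : r.Coprime 6) :
    Subgroup.normalClosure {tc 2 3 r ^ ((r + 3) / 2) * ta 2 3 r * (tc 2 3 r ^ ((r + 3) / 2))⁻¹ *
      ta 2 3 r} = ⊤ := by
  set y := tc 2 3 r ^ ((r + 3) / 2) * ta 2 3 r * (tc 2 3 r ^ ((r + 3) / 2))⁻¹ * ta 2 3 r
    with hy_def
  set π := QuotientGroup.mk' (Subgroup.normalClosure {y})
  have hk : 2 * ((r + 3) / 2) = r + 3 := by
    have : r % 2 = 1 := Nat.odd_iff.1 (hr.coprime_dvd_right (by norm_num : 2 ∣ 6)).odd_of_right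
    omega
  have hy : π y = 1 := (QuotientGroup.eq_one_iff y).2 (Subgroup.subset_normalClosure rfl)
  simp only [hy_def, map_mul, map_inv, map_pow] at hy
  obtain ⟨ha, hb, hc⟩ := eq_one_of_triangle_relations_of_conj (A := π (ta 2 3 r))
    (B := π (tb 2 3 r)) (C := π (tc 2 3 r)) hr hk
    (by rw [← map_pow, ta_pow_eq_one, map_one]) (by rw [← map_pow, tb_pow_eq_one, map_one])
    (by rw [← map_pow, tc_pow_eq_one, map_one])
    (by rw [← map_mul, ← map_mul, ta_mul_tb_mul_tc, map_one]) hy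
  exact TriangleGroup.eq_top_of_generators_mem _ ((QuotientGroup.eq_one_iff _).1 ha)
    ((QuotientGroup.eq_one_iff _).1 hb) ((QuotientGroup.eq_one_iff _).1 hc)

theorem Subgroup.eq_top_of_sup_eq_top_of_le_center {G : Type*} [Group G]
    (hG : _root_.commutator G = ⊤) {H N : Subgroup G} [H.Normal] (hN : N ≤ center G)
    (hHN : H ⊔ N = ⊤) : H = ⊤ :=
  top_le_iff.1 <| hG ▸ Normal.commutator_le_of_self_sup_commutative_eq_top
    (eq_top_mono (sup_le_sup_left hN H) hHN) inferInstance

theorem natAbs_six_mul_add_one_coprime_six (s : ℤ) : (6 * s + 1).natAbs.Coprime 6 :=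
  Int.isCoprime_iff_gcd_eq_one.1 (⟨1, -s, by ring⟩ : IsCoprime (6 * s + 1) 6)

/-- If G is a perfect group, N a central subgroup, and m ∈ G maps to the element
y = c^((r+3)/2) * a * c^(-(r+3)/2) * a of Δ(2,3,|6s+1|) under an isomorphism
G/N ≃* Δ(2,3,|6s+1|), then m normally generates G. -/
theorem normally_generates_of_central_extension_of_triangle_group
    (s : ℤ) (G : Type*) [Group G]
    (hG : ⁅(⊤ : Subgroup G), (⊤ : Subgroup G)⁆ = ⊤)
    (N : Subgroup G) (hN : N ≤ Subgroup.center G) [N.Normal]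
    (m : G)
    (φ : (G ⧸ N) ≃* TriangleGroup 2 3 (6 * s + 1).natAbs)
    (hφ : φ (QuotientGroup.mk m) =
      tc 2 3 (6 * s + 1).natAbs ^ (((6 * s + 1).natAbs + 3) / 2) *
        ta 2 3 (6 * s + 1).natAbs *
        (tc 2 3 (6 * s + 1).natAbs ^ (((6 * s + 1).natAbs + 3) / 2))⁻¹ *
        ta 2 3 (6 * s + 1).natAbs) :
    Subgroup.normalClosure {m} = ⊤ := by
  set ψ := φ.toMonoidHom.comp (QuotientGroup.mk' N)
  have hψ_ker : ψ.ker = N := by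
    rw [MonoidHom.ker_comp_of_injective _ _ φ.injective, QuotientGroup.ker_mk']
  have hψ_map : (Subgroup.normalClosure {m}).map ψ = ⊤ := by
    rw [Subgroup.map_normalClosure _ _ (φ.surjective.comp (QuotientGroup.mk'_surjective N)),
      Set.image_singleton]
    exact hφ ▸ TriangleGroup.normalClosure_conj_mul_eq_top (natAbs_six_mul_add_one_coprime_six s)
  refine Subgroup.eq_top_of_sup_eq_top_of_le_center hG hN ?_
  rw [← hψ_ker, ← Subgroup.comap_map_eq, hψ_map, Subgroup.comap_top]
end

section
/- Let s be an integer and set r = |6s+1|. In the triangle group Δ(2,3,r) (with generators a, b, c), the element y = c^((r+3)/2) * a * c^(-(r+3)/2) * a normally generates: Subgroup.normalClosure {y} = ⊤. -/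
lemma triv_of_rel {Q : Type*} [Group Q] (A B C : Q) (r k : ℕ) (u v m n : ℤ)
    (h2k : 2 * k = r + 3)
    (hbez3 : 3 * u + (k : ℤ) * v = 1)
    (hbez6 : 6 * m + (r : ℤ) * n = 1)
    (h2 : A ^ 2 = 1) (h3 : B ^ 3 = 1) (hr : C ^ r = 1)
    (habc : A * B * C = 1)
    (hy : C ^ k * A * (C ^ k)⁻¹ * A = 1) :
    A = 1 ∧ B = 1 ∧ C = 1 := by
  have hAA : A * A = 1 := by rw [← sq]; exact h2
  have hAinv : A⁻¹ = A := inv_eq_of_mul_eq_one_right hAA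
  have hck : Commute (C ^ k) A := by
    have h1 : C ^ k * A * (C ^ k)⁻¹ = A⁻¹ := eq_inv_iff_mul_eq_one.mpr hy
    rw [hAinv] at h1
    show C ^ k * A = A * C ^ k
    calc C ^ k * A = (C ^ k * A * (C ^ k)⁻¹) * C ^ k := by group
      _ = A * C ^ k := by rw [h1]
  have hc3 : Commute (C ^ 3) A := by
    have h := hck.pow_left 2
    rwa [← pow_mul, show k * 2 = r + 3 by omega, pow_add, hr, one_mul] at h
  have hCA : Commute C A := by
    have e : ((C ^ (3 : ℕ)) ^ u) * ((C ^ k) ^ v) = C := by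
      rw [← zpow_natCast C 3, ← zpow_natCast C k, ← zpow_mul, ← zpow_mul, ← zpow_add,
        show ((3 : ℕ) : ℤ) * u + (k : ℤ) * v = 1 by push_cast; linarith, zpow_one]
    calc C * A = ((C ^ (3 : ℕ)) ^ u * (C ^ k) ^ v) * A := by rw [e]
      _ = A * ((C ^ (3 : ℕ)) ^ u * (C ^ k) ^ v) :=
        ((hc3.zpow_left u).mul_left (hck.zpow_left v))
      _ = A * C := by rw [e]
  have hB : B = A⁻¹ * C⁻¹ := by
    calc B = A⁻¹ * (A * B * C) * C⁻¹ := by group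
      _ = A⁻¹ * 1 * C⁻¹ := by rw [habc]
      _ = A⁻¹ * C⁻¹ := by group
  have hcomm : Commute A⁻¹ C⁻¹ := hCA.symm.inv_inv
  have hc3A : C ^ 3 = A := by
    have h := h3
    rw [hB, hcomm.mul_pow, hAinv] at h
    have hA3 : A ^ 3 = A := by rw [pow_succ, h2, one_mul]
    rw [hA3, inv_pow] at h
    exact (mul_inv_eq_one.mp h).symm
  have hc6 : C ^ 6 = 1 := by
    have h36 : (C ^ 3) ^ 2 = C ^ 6 := by rw [← pow_mul]
    rw [← h36, hc3A, h2]
  have hC : C = 1 := by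
    have e : ((C ^ (6 : ℕ)) ^ m) * ((C ^ r) ^ n) = C := by
      rw [← zpow_natCast C 6, ← zpow_natCast C r, ← zpow_mul, ← zpow_mul, ← zpow_add,
        show ((6 : ℕ) : ℤ) * m + (r : ℤ) * n = 1 by push_cast; linarith, zpow_one]
    rw [hc6, hr, one_zpow, one_zpow, one_mul] at e
    exact e.symm
  have hA : A = 1 := by rw [← hc3A, hC, one_pow]
  exact ⟨hA, by rw [hB, hA, hC]; simp, hC⟩

/-- For r = |6s+1|, the element y = c^((r+3)/2) * a * c^(-(r+3)/2) * a
normally generates the triangle group Δ(2,3,r). -/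
theorem roll_spun_element_normally_generates (s : ℤ) :
    Subgroup.normalClosure
      {tc 2 3 (6 * s + 1).natAbs ^ (((6 * s + 1).natAbs + 3) / 2) *
          ta 2 3 (6 * s + 1).natAbs *
          (tc 2 3 (6 * s + 1).natAbs ^ (((6 * s + 1).natAbs + 3) / 2))⁻¹ *
          ta 2 3 (6 * s + 1).natAbs} = ⊤ := by
  set r : ℕ := (6 * s + 1).natAbs with hr_def
  set k : ℕ := (r + 3) / 2 with hk_def
  -- arithmetic facts
  have hodd : Odd r := Int.natAbs_odd.mpr ⟨3 * s, by ring⟩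
  have h2k : 2 * k = r + 3 := by
    obtain ⟨t, ht⟩ := hodd
    omega
  have hcop6 : Nat.gcd r 6 = 1 := by
    have : IsCoprime (6 * s + 1) (6 : ℤ) := ⟨1, -s, by ring⟩
    have hg := Int.isCoprime_iff_gcd_eq_one.mp this
    simpa [Int.gcd, hr_def] using hg
  have h3k : Nat.gcd 3 k = 1 := by
    have hnd : ¬ (3 : ℕ) ∣ k := by
      intro h3
      have h3r : (3 : ℕ) ∣ r := by omega
      have := Nat.dvd_gcd h3r (by norm_num : (3:ℕ) ∣ 6)
      omega
    exact ((by norm_num : Nat.Prime 3).coprime_iff_not_dvd).mpr hnd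
  have h6r : Nat.gcd 6 r = 1 := by rwa [Nat.gcd_comm]
  -- Bezout coefficients
  have hbez3 : 3 * Nat.gcdA 3 k + (k : ℤ) * Nat.gcdB 3 k = 1 := by
    have := Nat.gcd_eq_gcd_ab 3 k
    rw [h3k] at this
    push_cast at this ⊢
    linarith
  have hbez6 : 6 * Nat.gcdA 6 r + (r : ℤ) * Nat.gcdB 6 r = 1 := by
    have := Nat.gcd_eq_gcd_ab 6 r
    rw [h6r] at this
    push_cast at this ⊢
    linarith
  -- relators hold in the triangle group
  have hrel : ∀ w ∈ triangleRels 2 3 r, PresentedGroup.mk (triangleRels 2 3 r) w = 1 := by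
    intro w hw
    exact (QuotientGroup.eq_one_iff w).mpr (Subgroup.subset_normalClosure hw)
  have h2G : ta 2 3 r ^ 2 = 1 := by
    have := hrel _ (by simp [triangleRels] : FreeGroup.of TriGen.a ^ 2 ∈ triangleRels 2 3 r)
    rw [map_pow] at this
    exact this
  have h3G : tb 2 3 r ^ 3 = 1 := by
    have := hrel _ (by simp [triangleRels] : FreeGroup.of TriGen.b ^ 3 ∈ triangleRels 2 3 r)
    rw [map_pow] at this
    exact this
  have hrG : tc 2 3 r ^ r = 1 := by
    have := hrel _ (by simp [triangleRels] : FreeGroup.of TriGen.c ^ r ∈ triangleRels 2 3 r)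
    rw [map_pow] at this
    exact this
  have habcG : ta 2 3 r * tb 2 3 r * tc 2 3 r = 1 := by
    have := hrel _ (by simp [triangleRels] :
      FreeGroup.of TriGen.a * FreeGroup.of TriGen.b * FreeGroup.of TriGen.c ∈ triangleRels 2 3 r)
    rw [map_mul, map_mul] at this
    exact this
  -- pass to quotient by normal closure of y
  set y : TriangleGroup 2 3 r :=
    tc 2 3 r ^ k * ta 2 3 r * (tc 2 3 r ^ k)⁻¹ * ta 2 3 r with hy_def
  set N : Subgroup (TriangleGroup 2 3 r) := Subgroup.normalClosure {y} with hN_def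
  haveI : N.Normal := Subgroup.normalClosure_normal
  set φ : TriangleGroup 2 3 r →* TriangleGroup 2 3 r ⧸ N := QuotientGroup.mk' N with hφ
  have hyN : φ y = 1 := (QuotientGroup.eq_one_iff y).mpr
    (Subgroup.subset_normalClosure (Set.mem_singleton y))
  have hyQ : φ (tc 2 3 r) ^ k * φ (ta 2 3 r) * (φ (tc 2 3 r) ^ k)⁻¹ * φ (ta 2 3 r) = 1 := by
    rw [← map_pow, ← map_inv, ← map_mul, ← map_mul, ← map_mul]
    exact hyN
  obtain ⟨hA1, hB1, hC1⟩ := triv_of_rel (φ (ta 2 3 r)) (φ (tb 2 3 r)) (φ (tc 2 3 r)) r k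
    (Nat.gcdA 3 k) (Nat.gcdB 3 k) (Nat.gcdA 6 r) (Nat.gcdB 6 r)
    h2k hbez3 hbez6
    (by rw [← map_pow, h2G, map_one])
    (by rw [← map_pow, h3G, map_one])
    (by rw [← map_pow, hrG, map_one])
    (by rw [← map_mul, ← map_mul, habcG, map_one])
    hyQ
  have haN : ta 2 3 r ∈ N := (QuotientGroup.eq_one_iff _).mp hA1
  have hbN : tb 2 3 r ∈ N := (QuotientGroup.eq_one_iff _).mp hB1
  have hcN : tc 2 3 r ∈ N := (QuotientGroup.eq_one_iff _).mp hC1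
  refine (Subgroup.eq_top_iff' N).mpr ?_
  intro x
  refine PresentedGroup.generated_by _ N (fun j => ?_) x
  cases j
  · exact haN
  · exact hbN
  · exact hcN
end

section
/- Let r be a positive odd integer not divisible by 3. In the triangle group Δ(2,3,r) (with generators a, b, c), let y = c^((r+3)/2) * a * c^(-(r+3)/2) * a. Then the quotient of Δ(2,3,r) by the normal closure of {y} is abelian; equivalently, the commutator subgroup ⁅(⊤ : Subgroup Δ(2,3,r)), (⊤ : Subgroup Δ(2,3,r))⁆ is contained in Subgroup.normalClosure {y}. -/
/-! Modulo `y`, the involution `a` is inverted, hence fixed, by conjugation with `c^((r+3)/2)`,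
so it commutes with `c^(r+3) = c³`. As `3` is prime to the order of `c`, `c` is a power of `c³`,
so `a` commutes with `c`. Since `b = a⁻¹c⁻¹`, the group is generated by `a` and `c`, and the
quotient is abelian. -/

open Subgroup

section GroupTheory

variable {G : Type*} [Group G]

theorem commute_of_sq_eq_one_of_conj_mul_eq_one {a x : G} (ha : a ^ 2 = 1)
    (h : x * a * x⁻¹ * a = 1) : Commute a x := by
  have ha_inv : a⁻¹ = a := inv_eq_of_mul_eq_one_right (by rwa [← sq])
  have hconj : x * a * x⁻¹ = a := by rw [mul_eq_one_iff_eq_inv.mp h, ha_inv]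
  exact (mul_inv_eq_iff_eq_mul.mp hconj).symm

theorem Commute.of_pow_right_of_coprime {M : Type*} [Monoid M] {a c : M} {m n : ℕ}
    (hmn : m.Coprime n) (hcn : c ^ n = 1) (h : Commute a (c ^ m)) : Commute a c := by
  obtain ⟨k, hk⟩ :=
    exists_pow_eq_self_of_coprime (hmn.coprime_dvd_right (orderOf_dvd_of_pow_eq_one hcn))
  exact hk ▸ h.pow_right k

theorem commutator_top_le_ker_of_commute {H : Type*} [Group H] (f : G →* H) {s : Set G}
    (hs : closure s = ⊤) (hcomm : ∀ x ∈ s, ∀ y ∈ s, Commute (f x) (f y)) :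
    ⁅(⊤ : Subgroup G), ⊤⁆ ≤ f.ker := by
  have hrange : f.range = closure (f '' s) := by
    rw [MonoidHom.range_eq_map, ← hs, MonoidHom.map_closure]
  have hrange_comm : f.range ≤ centralizer f.range := by
    rw [hrange, le_centralizer_iff_isMulCommutative]
    refine isMulCommutative_closure ?_
    rintro _ ⟨x, hx, rfl⟩ _ ⟨y, hy, rfl⟩
    exact hcomm x hx y hy
  rw [commutator_le]
  rintro g - h -
  rw [MonoidHom.mem_ker, map_commutatorElement, commutatorElement_eq_one_iff_mul_comm]
  exact hrange_comm ⟨h, rfl⟩ (f g) ⟨g, rfl⟩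

end GroupTheory

section TriangleGroup

variable {p q r : ℕ}

theorem ta_pow : ta p q r ^ p = 1 :=
  PresentedGroup.one_of_mem (Set.mem_insert _ _)

theorem tc_pow : tc p q r ^ r = 1 :=
  PresentedGroup.one_of_mem (by simp [triangleRels])

theorem tb_eq_inv_mul_inv : tb p q r = (ta p q r)⁻¹ * (tc p q r)⁻¹ := by
  have habc : ta p q r * tb p q r * tc p q r = 1 :=
    PresentedGroup.one_of_mem (by simp [triangleRels])
  rw [eq_inv_mul_iff_mul_eq, ← mul_inv_eq_one, inv_inv, habc]

theorem closure_ta_tc : closure {ta p q r, tc p q r} = ⊤ := by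
  refine eq_top_iff.2 <| (PresentedGroup.closure_range_of _).ge.trans <| (closure_le _).2 ?_
  have ha : ta p q r ∈ closure {ta p q r, tc p q r} := subset_closure (Set.mem_insert _ _)
  have hc : tc p q r ∈ closure {ta p q r, tc p q r} :=
    subset_closure (Set.mem_insert_of_mem _ rfl)
  rintro _ ⟨_ | _ | _, rfl⟩
  · exact ha
  · show tb p q r ∈ _
    rw [tb_eq_inv_mul_inv]
    exact mul_mem (inv_mem ha) (inv_mem hc)
  · exact hc

end TriangleGroup

theorem commutator_le_normalClosure_roll_spun_element_general
    (r : ℕ) (hodd : Odd r) (h3 : ¬ (3 ∣ r)) :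
    ⁅(⊤ : Subgroup (TriangleGroup 2 3 r)), (⊤ : Subgroup (TriangleGroup 2 3 r))⁆ ≤
      Subgroup.normalClosure
        {tc 2 3 r ^ ((r + 3) / 2) * ta 2 3 r * (tc 2 3 r ^ ((r + 3) / 2))⁻¹ * ta 2 3 r} := by
  set N := normalClosure
    {tc 2 3 r ^ ((r + 3) / 2) * ta 2 3 r * (tc 2 3 r ^ ((r + 3) / 2))⁻¹ * ta 2 3 r}
  set f := QuotientGroup.mk' N
  have hy : f (tc 2 3 r) ^ ((r + 3) / 2) * f (ta 2 3 r) * (f (tc 2 3 r) ^ ((r + 3) / 2))⁻¹ *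
      f (ta 2 3 r) = 1 := by
    rw [← map_pow, ← map_mul, ← map_inv, ← map_mul, ← map_mul]
    exact (QuotientGroup.eq_one_iff _).2 (subset_normalClosure rfl)
  have hcomm_half : Commute (f (ta 2 3 r)) (f (tc 2 3 r) ^ ((r + 3) / 2)) :=
    commute_of_sq_eq_one_of_conj_mul_eq_one (by rw [← map_pow, ta_pow, map_one]) hy
  have hc_pow : f (tc 2 3 r) ^ r = 1 := by rw [← map_pow, tc_pow, map_one]
  have hcomm_cube : Commute (f (ta 2 3 r)) (f (tc 2 3 r) ^ 3) := by
    have h2 : 2 * ((r + 3) / 2) = r + 3 := by obtain ⟨m, rfl⟩ := hodd; omega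
    simpa only [← pow_mul, mul_comm _ 2, h2, pow_add, hc_pow, one_mul] using
      hcomm_half.pow_right 2
  have hcomm : Commute (f (ta 2 3 r)) (f (tc 2 3 r)) :=
    hcomm_cube.of_pow_right_of_coprime
      ((Nat.coprime_or_dvd_of_prime Nat.prime_three r).resolve_right h3) hc_pow
  rw [← QuotientGroup.ker_mk' N]
  refine commutator_top_le_ker_of_commute f closure_ta_tc ?_
  rintro _ (rfl | rfl) _ (rfl | rfl)
  exacts [.refl _, hcomm, hcomm.symm, .refl _]

/-- For r a positive odd integer not divisible by 3, the quotient of Δ(2,3,r) by the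
normal closure of y = c^((r+3)/2) * a * c^(-(r+3)/2) * a is abelian; equivalently, the
commutator subgroup of Δ(2,3,r) is contained in the normal closure of {y}. -/
theorem commutator_le_normalClosure_roll_spun_element
    (r : ℕ) (hr : 0 < r) (hodd : Odd r) (h3 : ¬ (3 ∣ r)) :
    ⁅(⊤ : Subgroup (TriangleGroup 2 3 r)), (⊤ : Subgroup (TriangleGroup 2 3 r))⁆ ≤
      Subgroup.normalClosure
        {tc 2 3 r ^ ((r + 3) / 2) * ta 2 3 r * (tc 2 3 r ^ ((r + 3) / 2))⁻¹ * ta 2 3 r} :=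
  commutator_le_normalClosure_roll_spun_element_general r hodd h3
end

section
/- Let G be a perfect group, let N be a subgroup of G contained in the center of G (hence normal), and let m ∈ G. If the image of m in the quotient G/N normally generates G/N (i.e., Subgroup.normalClosure {QuotientGroup.mk m} = ⊤ in G ⧸ N), then m normally generates G (i.e., Subgroup.normalClosure {m} = ⊤ in G). -/
namespace Subgroup

variable {G : Type*} [Group G]

theorem isMulCommutative_of_le_center {N : Subgroup G} (hN : N ≤ center G) :
    IsMulCommutative N :=
  le_centralizer_iff_isMulCommutative.mp (hN.trans (center_le_centralizer (N : Set G)))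

theorem normalClosure_sup_eq_top_of_normalClosure_image_mk_eq_top {N : Subgroup G} [N.Normal]
    {s : Set G} (h : normalClosure (QuotientGroup.mk '' s : Set (G ⧸ N)) = ⊤) :
    normalClosure s ⊔ N = ⊤ := by
  have hmap : (normalClosure s).map (QuotientGroup.mk' N) = ⊤ := by
    rwa [map_normalClosure _ _ (QuotientGroup.mk'_surjective N)]
  rw [← QuotientGroup.ker_mk' N, ← comap_map_eq, hmap, comap_top]

end Subgroup

/-- If G is a perfect group, N a central subgroup, and the image of m in G/N
normally generates G/N, then m normally generates G. -/
theorem normally_generates_of_quotient_by_central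
    (G : Type*) [Group G]
    (hG : ⁅(⊤ : Subgroup G), (⊤ : Subgroup G)⁆ = ⊤)
    (N : Subgroup G) (hN : N ≤ Subgroup.center G) [N.Normal]
    (m : G)
    (h : Subgroup.normalClosure {(QuotientGroup.mk m : G ⧸ N)} = ⊤) :
    Subgroup.normalClosure {m} = ⊤ := by
  have hsup : Subgroup.normalClosure {m} ⊔ N = ⊤ :=
    Subgroup.normalClosure_sup_eq_top_of_normalClosure_image_mk_eq_top
      (by rwa [Set.image_singleton])
  rw [eq_top_iff, ← hG, ← commutator_def]
  exact Subgroup.Normal.commutator_le_of_self_sup_commutative_eq_top hsup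
    (Subgroup.isMulCommutative_of_le_center hN)
end

section
/- Let G be a perfect group and let t ∈ G. Then t normally generates G (Subgroup.normalClosure {t} = ⊤) if and only if G is generated by commutators of elements of G with powers of t, i.e., ⁅(⊤ : Subgroup G), Subgroup.zpowers t⁆ = ⊤. -/
open scoped commutatorElement

namespace Subgroup

variable {G : Type*} [Group G]

theorem normal_commutator_top_left (K : Subgroup G) : (⁅(⊤ : Subgroup G), K⁆).Normal :=
  normalizer_eq_top_iff.mp (top_le_iff.mp (normalizer_commutator_ge_left ⊤ K))

/-- Modulo `N = ⁅⊤, closure s⁆` the set `s` is central, hence so is its normal closure. -/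
theorem commutator_top_normalClosure (s : Set G) :
    ⁅(⊤ : Subgroup G), normalClosure s⁆ = ⁅(⊤ : Subgroup G), closure s⁆ := by
  set N := ⁅(⊤ : Subgroup G), closure s⁆
  have := normal_commutator_top_left (closure s)
  have : (upperCentralSeriesStep N).Normal := by
    rw [upperCentralSeriesStep_eq_comap_center]; infer_instance
  refine le_antisymm ?_ (commutator_mono le_rfl closure_le_normalClosure)
  have hs : s ⊆ upperCentralSeriesStep N := fun x hx y => by
    rw [show N = ⁅closure s, ⊤⁆ from commutator_comm _ _]
    exact commutator_mem_commutator (subset_closure hx) (mem_top y)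
  calc ⁅(⊤ : Subgroup G), normalClosure s⁆
      = ⁅normalClosure s, ⊤⁆ := commutator_comm _ _
    _ ≤ ⁅upperCentralSeriesStep N, ⊤⁆ := commutator_mono (normalClosure_le_normal hs) le_rfl
    _ ≤ N := commutator_le.mpr fun x hx y _ => hx y

end Subgroup

/-- Lemma 3.1: in a perfect group G, an element t normally generates G if and only if
G is generated by commutators of elements of G with powers of t. -/
theorem weight_element_iff_commutator_with_zpowers
    (G : Type*) [Group G]
    (hG : ⁅(⊤ : Subgroup G), (⊤ : Subgroup G)⁆ = ⊤) (t : G) :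
    Subgroup.normalClosure {t} = ⊤ ↔ ⁅(⊤ : Subgroup G), Subgroup.zpowers t⁆ = ⊤ := by
  rw [Subgroup.zpowers_eq_closure, ← Subgroup.commutator_top_normalClosure]
  constructor
  · intro h
    rw [h, hG]
  · intro h
    exact top_le_iff.mp (h ▸ Subgroup.commutator_le_right ⊤ (Subgroup.normalClosure {t}))
end
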